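/- Let L₁(a,b) = (1-a+a²+b²)/14 - b⁴/(16(a²+b²)((1-a)²+b²)). Then for all 0 ≤ a ≤ 1/2, 0 < b ≤ 1, and all ã with 0 ≤ ã ≤ 1/2, |ã-a| ≤ b/50, and all b̃ with 0 < b̃ ≤ 1, |b̃-b| ≤ b/50: |∂L₁/∂a(a,b)| < (2/b)·L₁(a,b), ∂²L₁/∂a²(ã,b) < (5/b²)·L₁(a,b), |∂L₁/∂b(a,b)| < (2/b)·L₁(a,b), and ∂²L₁/∂b²(a,b̃) < (4/b²)·L₁(a,b). -/

import Mathlib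

noncomputable def L1 (a b : ℝ) : ℝ := (1 - a + a^2 + b^2)/14 - b^4/(16*(a^2 + b^2)*((1 - a)^2 + b^2))

noncomputable def dLa (a b : ℝ) : ℝ :=
  (2*a-1)/14 - (2*a-1)*b^4*(a - a^2 - b^2) / (8*((a^2+b^2)*((1-a)^2+b^2))^2)

noncomputable def d2La (a b : ℝ) : ℝ :=
  1/7 + b^4*(1-6*a+6*a^2+2*b^2)/(8*((a^2+b^2)*((1-a)^2+b^2))^2)
    - (1-2*a)^2*(a-a^2-b^2)^2*b^4/(2*((a^2+b^2)*((1-a)^2+b^2))^3)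

noncomputable def dLb (a b : ℝ) : ℝ :=
  b/7 - b^3*((a^2+b^2)*(1-a)^2 + ((1-a)^2+b^2)*a^2)/(8*((a^2+b^2)*((1-a)^2+b^2))^2)

noncomputable def d2Lb (a b : ℝ) : ℝ :=
  1/7 - 3*b^2*((a^2+b^2)*(1-a)^2 + ((1-a)^2+b^2)*a^2)/(8*((a^2+b^2)*((1-a)^2+b^2))^2)
    + b^4*((1-a)^2*(a^2+b^2)*(((1-a)^2+b^2)+2*(a^2+b^2)) + a^2*((1-a)^2+b^2)*((a^2+b^2)+2*((1-a)^2+b^2)))/(4*((a^2+b^2)*((1-a)^2+b^2))^3)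

lemma hasDerivAt_L1_a (b : ℝ) (hb : b ≠ 0) (x : ℝ) :
    HasDerivAt (fun x => L1 x b) (dLa x b) x := by
  have h1 : (x^2+b^2) ≠ 0 := by positivity
  have h2 : ((1-x)^2+b^2) ≠ 0 := by positivity
  have hP : HasDerivAt (fun x : ℝ => x^2 + b^2) (2*x) x := by
    simpa using (hasDerivAt_pow 2 x).add_const (b^2)
  have hQ : HasDerivAt (fun x : ℝ => (1-x)^2 + b^2) (2*(1-x)*(-1)) x := by
    have h1 : HasDerivAt (fun x : ℝ => 1 - x) (-1) x := (hasDerivAt_id x).const_sub 1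
    simpa using (h1.pow 2).add_const (b^2)
  have hD : HasDerivAt (fun x : ℝ => 16*(x^2+b^2)*((1-x)^2+b^2))
      (16*(2*x)*((1-x)^2+b^2) + 16*(x^2+b^2)*(2*(1-x)*(-1))) x := by
    simpa [mul_assoc, Pi.mul_def] using ((hP.const_mul 16).mul hQ)
  have hDne : 16*(x^2+b^2)*((1-x)^2+b^2) ≠ 0 := by positivity
  have hq := (hasDerivAt_const x (b^4)).div hD hDne
  have hpoly : HasDerivAt (fun x : ℝ => (1 - x + x^2 + b^2)/14) ((0 - 1 + 2*x + 0)/14) x := by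
    have : HasDerivAt (fun x : ℝ => 1 - x + x^2 + b^2) (0 - 1 + 2*x + 0) x := by
      exact (((hasDerivAt_const x 1).sub (hasDerivAt_id x)).add
        (by simpa using hasDerivAt_pow 2 x)).add (hasDerivAt_const x (b^2))
    simpa using this.div_const 14
  have := hpoly.sub hq
  refine this.congr_deriv ?_
  unfold dLa
  field_simp
  ring

lemma hasDerivAt_dLa (b : ℝ) (hb : b ≠ 0) (x : ℝ) :
    HasDerivAt (fun x => dLa x b) (d2La x b) x := by
  have h1 : (x^2+b^2) ≠ 0 := by positivity
  have h2 : ((1-x)^2+b^2) ≠ 0 := by positivity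
  have hP : HasDerivAt (fun x : ℝ => x^2 + b^2) (2*x) x := by
    simpa using (hasDerivAt_pow 2 x).add_const (b^2)
  have hQ : HasDerivAt (fun x : ℝ => (1-x)^2 + b^2) (2*(1-x)*(-1)) x := by
    have h1 : HasDerivAt (fun x : ℝ => 1 - x) (-1) x := (hasDerivAt_id x).const_sub 1
    simpa using (h1.pow 2).add_const (b^2)
  have hPQ : HasDerivAt (fun x : ℝ => (x^2+b^2)*((1-x)^2+b^2))
      (2*x*((1-x)^2+b^2) + (x^2+b^2)*(2*(1-x)*(-1))) x := hP.mul hQ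
  have hD : HasDerivAt (fun x : ℝ => 8*((x^2+b^2)*((1-x)^2+b^2))^2)
      (8*(2*((x^2+b^2)*((1-x)^2+b^2))^1*(2*x*((1-x)^2+b^2) + (x^2+b^2)*(2*(1-x)*(-1))))) x := by
    simpa [mul_assoc] using (hPQ.pow 2).const_mul 8
  have hDne : 8*((x^2+b^2)*((1-x)^2+b^2))^2 ≠ 0 := by positivity
  have hN : HasDerivAt (fun x : ℝ => (2*x-1)*b^4*(x - x^2 - b^2))
      ((2*b^4)*(x-x^2-b^2) + (2*x-1)*b^4*(1 - 2*x - 0)) x := by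
    have hn1 : HasDerivAt (fun x : ℝ => (2*x-1)*b^4) (2*b^4) x := by
      have : HasDerivAt (fun x : ℝ => 2*x-1) 2 x := by
        simpa using ((hasDerivAt_id x).const_mul 2).sub_const 1
      simpa using this.mul_const (b^4)
    have hn2 : HasDerivAt (fun x : ℝ => x - x^2 - b^2) (1 - 2*x - 0) x := by
      exact ((hasDerivAt_id x).sub (by simpa using hasDerivAt_pow 2 x)).sub (hasDerivAt_const x (b^2))
    simpa [Pi.mul_def] using hn1.mul hn2
  have hlin : HasDerivAt (fun x : ℝ => (2*x-1)/14) (2/14) x := by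
    have : HasDerivAt (fun x : ℝ => 2*x-1) 2 x := by
      simpa using ((hasDerivAt_id x).const_mul 2).sub_const 1
    simpa using this.div_const 14
  have := hlin.sub (hN.div hD hDne)
  refine this.congr_deriv ?_
  unfold d2La
  field_simp
  ring

lemma hasDerivAt_L1_b (a : ℝ) (y : ℝ) (hy : y ≠ 0) (h2 : ((1-a)^2+y^2) ≠ 0) :
    HasDerivAt (L1 a) (dLb a y) y := by
  have h1 : (a^2+y^2) ≠ 0 := by positivity
  have hP : HasDerivAt (fun y : ℝ => a^2 + y^2) (2*y) y := by
    simpa using (hasDerivAt_pow 2 y).const_add (a^2)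
  have hQ : HasDerivAt (fun y : ℝ => (1-a)^2 + y^2) (2*y) y := by
    simpa using (hasDerivAt_pow 2 y).const_add ((1-a)^2)
  have hD : HasDerivAt (fun y : ℝ => 16*(a^2+y^2)*((1-a)^2+y^2))
      (16*(2*y)*((1-a)^2+y^2) + 16*(a^2+y^2)*(2*y)) y := by
    simpa [mul_assoc, Pi.mul_def] using ((hP.const_mul 16).mul hQ)
  have hDne : 16*(a^2+y^2)*((1-a)^2+y^2) ≠ 0 := by
    intro h; rcases mul_eq_zero.1 h with h' | h'
    · rcases mul_eq_zero.1 h' with h'' | h''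
      · norm_num at h''
      · exact h1 h''
    · exact h2 h'
  have hN : HasDerivAt (fun y : ℝ => y^4) (4*y^3) y := by simpa using hasDerivAt_pow 4 y
  have hq := hN.div hD hDne
  have hpoly : HasDerivAt (fun y : ℝ => (1 - a + a^2 + y^2)/14) ((2*y)/14) y := by
    have : HasDerivAt (fun y : ℝ => 1 - a + a^2 + y^2) (2*y) y := by
      simpa using (hasDerivAt_pow 2 y).const_add (1 - a + a^2)
    simpa using this.div_const 14
  have h := hpoly.sub hq
  have hfun : (fun y => (1 - a + a^2 + y^2)/14 - y^4/(16*(a^2 + y^2)*((1 - a)^2 + y^2))) = L1 a := by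
    funext y; rfl
  refine h.congr_deriv ?_
  unfold dLb
  field_simp
  ring

lemma hasDerivAt_dLb (a : ℝ) (y : ℝ) (hy : y ≠ 0) (h2 : ((1-a)^2+y^2) ≠ 0) :
    HasDerivAt (fun y => dLb a y) (d2Lb a y) y := by
  have h1 : (a^2+y^2) ≠ 0 := by positivity
  have hP : HasDerivAt (fun y : ℝ => a^2 + y^2) (2*y) y := by
    simpa using (hasDerivAt_pow 2 y).const_add (a^2)
  have hQ : HasDerivAt (fun y : ℝ => (1-a)^2 + y^2) (2*y) y := by
    simpa using (hasDerivAt_pow 2 y).const_add ((1-a)^2)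
  have hPQ : HasDerivAt (fun y : ℝ => (a^2+y^2)*((1-a)^2+y^2))
      (2*y*((1-a)^2+y^2) + (a^2+y^2)*(2*y)) y := hP.mul hQ
  have hD : HasDerivAt (fun y : ℝ => 8*((a^2+y^2)*((1-a)^2+y^2))^2)
      (8*(2*((a^2+y^2)*((1-a)^2+y^2))^1*(2*y*((1-a)^2+y^2) + (a^2+y^2)*(2*y)))) y := by
    simpa [mul_assoc] using (hPQ.pow 2).const_mul 8
  have hDne : 8*((a^2+y^2)*((1-a)^2+y^2))^2 ≠ 0 := by
    intro h
    rcases mul_eq_zero.1 h with h' | h'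
    · norm_num at h'
    · exact (pow_ne_zero 2 (mul_ne_zero h1 h2)) h'
  have hcube : HasDerivAt (fun y : ℝ => y^3) (3*y^2) y := by simpa using hasDerivAt_pow 3 y
  have hN : HasDerivAt (fun y : ℝ => y^3*((a^2+y^2)*(1-a)^2 + ((1-a)^2+y^2)*a^2))
      (3*y^2*((a^2+y^2)*(1-a)^2 + ((1-a)^2+y^2)*a^2) + y^3*(2*y*(1-a)^2 + 2*y*a^2)) y := by
    have hn2 : HasDerivAt (fun y : ℝ => (a^2+y^2)*(1-a)^2 + ((1-a)^2+y^2)*a^2)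
        (2*y*(1-a)^2 + 2*y*a^2) y := (hP.mul_const ((1-a)^2)).add (hQ.mul_const (a^2))
    exact hcube.mul hn2
  have hlin : HasDerivAt (fun y : ℝ => y/7) (1/7) y := by
    simpa using (hasDerivAt_id y).div_const 7
  have h := hlin.sub (hN.div hD hDne)
  refine h.congr_deriv ?_
  unfold d2Lb
  field_simp
  ring

lemma lowA1 (a b : ℝ) (ha0 : 0 ≤ a) (ha : a ≤ 1/2) (hb0 : 0 < b) (hb : b ≤ 1) :
    11/100*b < 2 * L1 a b := by
  have hP : (0:ℝ) < a^2+b^2 := by positivity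
  have hQ : (0:ℝ) < (1-a)^2+b^2 := by positivity
  rw [show 2 * L1 a b = (8*((a^2+b^2)*((1-a)^2+b^2))*(1-a+a^2+b^2) - 7*b^4)/(56*((a^2+b^2)*((1-a)^2+b^2))) from by
    unfold L1; field_simp; ring]
  rw [lt_div_iff₀ (by positivity)]
  nlinarith [sq_nonneg (a-1/2), sq_nonneg (b-1), sq_nonneg (a*b), mul_pos hP hQ, sq_nonneg (a^2+b^2 - 5/8), sq_nonneg ((1-a)^2+b^2-9/8), sq_nonneg (b^2-5/8), mul_nonneg ha0 hb0.le, sq_nonneg (a*(1-a)-b^2)]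

lemma lowA2 (a b : ℝ) (ha0 : 0 ≤ a) (ha : a ≤ 1/2) (hb0 : 0 < b) (hb : b ≤ 1) :
    7/25*b^2 < 5 * L1 a b := by
  have hP : (0:ℝ) < a^2+b^2 := by positivity
  have hQ : (0:ℝ) < (1-a)^2+b^2 := by positivity
  rw [show 5 * L1 a b = (40*((a^2+b^2)*((1-a)^2+b^2))*(1-a+a^2+b^2) - 35*b^4)/(112*((a^2+b^2)*((1-a)^2+b^2))) from by
    unfold L1; field_simp; ring]
  rw [lt_div_iff₀ (by positivity)]
  nlinarith [sq_nonneg (a-1/2), sq_nonneg (b-1), sq_nonneg (a*b), mul_pos hP hQ, sq_nonneg (a^2+b^2 - 5/8), sq_nonneg (b^2-5/8), mul_nonneg ha0 hb0.le, sq_nonneg (a*(1-a)-b^2)]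

lemma lowA3 (a b : ℝ) (ha0 : 0 ≤ a) (ha : a ≤ 1/2) (hb0 : 0 < b) (hb : b ≤ 1) :
    1/4*b^2 < 4 * L1 a b := by
  have hP : (0:ℝ) < a^2+b^2 := by positivity
  have hQ : (0:ℝ) < (1-a)^2+b^2 := by positivity
  rw [show 4 * L1 a b = (32*((a^2+b^2)*((1-a)^2+b^2))*(1-a+a^2+b^2) - 28*b^4)/(112*((a^2+b^2)*((1-a)^2+b^2))) from by
    unfold L1; field_simp; ring]
  rw [lt_div_iff₀ (by positivity)]
  nlinarith [sq_nonneg (a-1/2), sq_nonneg (b-1), sq_nonneg (a*b), mul_pos hP hQ, sq_nonneg (a^2+b^2 - 5/8), sq_nonneg (b^2-5/8), mul_nonneg ha0 hb0.le, sq_nonneg (a*(1-a)-b^2)]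

lemma absdLa (a b : ℝ) (ha0 : 0 ≤ a) (ha : a ≤ 1/2) (hb0 : 0 < b) (hb : b ≤ 1) :
    |dLa a b| ≤ 11/100 := by
  have hP : (0:ℝ) < a^2+b^2 := by positivity
  have hQ : (0:ℝ) < (1-a)^2+b^2 := by positivity
  have h1a : (0:ℝ) ≤ 1-a := by linarith
  have h12a : (0:ℝ) ≤ 1-2*a := by linarith
  have t1 : b^4*(4*(1-a)^2*b^2) ≤ ((a^2+b^2)*((1-a)^2+b^2))^2 := by
    have e1 : b^4 ≤ (a^2+b^2)^2 := by nlinarith [sq_nonneg a, sq_nonneg (a^2+2*b^2)]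
    have e2 : 4*(1-a)^2*b^2 ≤ ((1-a)^2+b^2)^2 := by nlinarith [sq_nonneg ((1-a)^2 - b^2)]
    calc b^4*(4*(1-a)^2*b^2) ≤ (a^2+b^2)^2*((1-a)^2+b^2)^2 := by
          exact mul_le_mul e1 e2 (by positivity) (by positivity)
      _ = ((a^2+b^2)*((1-a)^2+b^2))^2 := by ring
  have t2 : 2*a*b*(b^2*(2*(1-a)*b*((1-a)^2+b^2))) ≤ ((a^2+b^2)*((1-a)^2+b^2))^2 := by
    have e1 : 2*a*b*b^2 ≤ (a^2+b^2)^2 := by nlinarith [sq_nonneg (a-b), sq_nonneg a, sq_nonneg b, mul_nonneg (mul_nonneg ha0 hb0.le) (sq_nonneg (a-b))]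
    have e2 : 2*(1-a)*b*((1-a)^2+b^2) ≤ ((1-a)^2+b^2)^2 := by
      have : 2*(1-a)*b ≤ (1-a)^2+b^2 := by nlinarith [sq_nonneg (1-a-b)]
      nlinarith [hQ]
    calc 2*a*b*(b^2*(2*(1-a)*b*((1-a)^2+b^2))) = (2*a*b*b^2)*(2*(1-a)*b*((1-a)^2+b^2)) := by ring
      _ ≤ (a^2+b^2)^2*((1-a)^2+b^2)^2 := by
          refine mul_le_mul e1 e2 (by positivity) (by positivity)
      _ = ((a^2+b^2)*((1-a)^2+b^2))^2 := by ring
  rw [show dLa a b = ((2*a-1)*(8*((a^2+b^2)*((1-a)^2+b^2))^2) - 14*(2*a-1)*b^4*(a-a^2-b^2))/(112*((a^2+b^2)*((1-a)^2+b^2))^2) from by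
    unfold dLa; field_simp; ring]
  rw [abs_div, abs_of_pos (show (0:ℝ) < 112*((a^2+b^2)*((1-a)^2+b^2))^2 by positivity),
    div_le_iff₀ (by positivity), abs_le]
  constructor
  · nlinarith [t1, mul_nonneg (mul_nonneg (mul_nonneg h12a ha0) h1a) (by positivity : (0:ℝ) ≤ b^4),
      mul_nonneg (sq_nonneg a) (by positivity : (0:ℝ) ≤ b^6), sq_nonneg ((a^2+b^2)*((1-a)^2+b^2))]
  · nlinarith [t2, mul_nonneg h12a (by positivity : (0:ℝ) ≤ b^6),
      mul_nonneg h12a (sq_nonneg ((a^2+b^2)*((1-a)^2+b^2))),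
      mul_nonneg (mul_nonneg (mul_nonneg ha0 h1a) (by positivity : (0:ℝ) ≤ b^4))
        (show (0:ℝ) ≤ (1-a)^2+b^2-(1-2*a) by nlinarith [sq_nonneg a, sq_nonneg b])]

set_option maxHeartbeats 1000000 in
lemma d2La_le (a b : ℝ) (ha0 : 0 ≤ a) (ha : a ≤ 1/2) (hb0 : 0 < b) (hb : b ≤ 1) :
    d2La a b ≤ 7/25 := by
  have hP : (0:ℝ) < a^2+b^2 := by positivity
  have hQ : (0:ℝ) < (1-a)^2+b^2 := by positivity
  have hq : (0:ℝ) ≤ (192/175)*((1-a)^2+b^2)^2 - (1-6*a+6*a^2+2*b^2) := by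
    nlinarith [sq_nonneg ((1-a)^2+b^2-1), sq_nonneg (a-1/2), sq_nonneg b, sq_nonneg (a*b), sq_nonneg (a*(1-a)), sq_nonneg ((1-a)*b), sq_nonneg (b^2 - (1-a)^2)]
  rw [show d2La a b = (8*((a^2+b^2)*((1-a)^2+b^2))^3 + 7*b^4*(1-6*a+6*a^2+2*b^2)*((a^2+b^2)*((1-a)^2+b^2)) - 28*(1-2*a)^2*(a-a^2-b^2)^2*b^4)/(56*((a^2+b^2)*((1-a)^2+b^2))^3) from by
    unfold d2La; field_simp; ring]
  rw [div_le_iff₀ (by positivity)]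
  nlinarith [mul_nonneg (mul_nonneg (mul_pos hP hQ).le (sq_nonneg ((1-a)^2+b^2))) (show (0:ℝ) ≤ (a^2+b^2)^2 - b^4 by nlinarith [sq_nonneg a]),
    mul_nonneg (mul_nonneg (mul_pos hP hQ).le (by positivity : (0:ℝ) ≤ b^4)) hq,
    mul_nonneg (mul_nonneg (sq_nonneg (1-2*a)) (sq_nonneg (a-a^2-b^2))) (by positivity : (0:ℝ) ≤ b^4)]

set_option maxHeartbeats 1000000 in
lemma absdLb (a b : ℝ) (ha0 : 0 ≤ a) (ha : a ≤ 1/2) (hb0 : 0 < b) (hb : b ≤ 1) :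
    |dLb a b| < 2/b * L1 a b := by
  have hP : (0:ℝ) < a^2+b^2 := by positivity
  have hQ : (0:ℝ) < (1-a)^2+b^2 := by positivity
  have hPQ : (0:ℝ) < (a^2+b^2)*((1-a)^2+b^2) := mul_pos hP hQ
  have hPb : b^2 ≤ a^2+b^2 := by nlinarith [sq_nonneg a]
  have hQ14 : 1/4+b^2 ≤ (1-a)^2+b^2 := by nlinarith
  have e : b^2*(1/4+b^2)^2 ≤ (a^2+b^2)*((1-a)^2+b^2)^2 :=
    mul_le_mul hPb (pow_le_pow_left₀ (by positivity) hQ14 2) (by positivity) hP.le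
  have key : (0:ℝ) < 6*(a^2+b^2)*((1-a)^2+b^2)^2 - 7*b^6 := by
    nlinarith [e, pow_pos hb0 2, mul_nonneg (by positivity : (0:ℝ) ≤ b^4) (by nlinarith : (0:ℝ) ≤ 1-b^2)]
  have quad : (0:ℝ) < (6+16*b^2)*((a^2+b^2)*((1-a)^2+b^2))^2 - 21*b^4*((a^2+b^2)*((1-a)^2+b^2)) + 7/2*b^6 + 14*b^8 := by
    nlinarith [sq_nonneg (2*(6+16*b^2)*((a^2+b^2)*((1-a)^2+b^2)) - 21*b^4),
      pow_pos hb0 6, pow_pos hb0 8, pow_pos hb0 10, (show (0:ℝ) < 24+64*b^2 by positivity)]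
  rw [abs_lt, div_mul_eq_mul_div, show dLb a b = (8*b*((a^2+b^2)*((1-a)^2+b^2))^2 - 7*b^3*((a^2+b^2)*(1-a)^2 + ((1-a)^2+b^2)*a^2))/(56*((a^2+b^2)*((1-a)^2+b^2))^2) from by
    unfold dLb; field_simp; ring,
    show 2 * L1 a b = (8*((a^2+b^2)*((1-a)^2+b^2))*(1-a+a^2+b^2) - 7*b^4)/(56*((a^2+b^2)*((1-a)^2+b^2))) from by
    unfold L1; field_simp; ring]
  constructor
  · rw [div_div, neg_lt, ← neg_div, div_lt_div_iff₀ (by positivity) (by positivity)]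
    nlinarith [quad, mul_nonneg (sq_nonneg (a-1/2)) (sq_nonneg ((a^2+b^2)*((1-a)^2+b^2))),
      mul_nonneg (sq_nonneg (a-1/2)) (by positivity : (0:ℝ) ≤ b^6)]
  · rw [div_div, div_lt_div_iff₀ (by positivity) (by positivity)]
    nlinarith [mul_pos hP key, mul_nonneg (sq_nonneg (a-1/2)) (sq_nonneg ((a^2+b^2)*((1-a)^2+b^2))),
      mul_nonneg (mul_nonneg (by positivity : (0:ℝ) ≤ 7*b^4) hQ.le) (sq_nonneg a)]

set_option maxHeartbeats 2000000 in
lemma d2Lb_le (a b : ℝ) (ha0 : 0 ≤ a) (ha : a ≤ 1/2) (hb0 : 0 < b) (hb : b ≤ 1) :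
    d2Lb a b ≤ 1/4 := by
  have hP : (0:ℝ) < a^2+b^2 := by positivity
  have hQ : (0:ℝ) < (1-a)^2+b^2 := by positivity
  have hPQ : (0:ℝ) < (a^2+b^2)*((1-a)^2+b^2) := mul_pos hP hQ
  rw [show d2Lb a b = (8*((a^2+b^2)*((1-a)^2+b^2))^3 - 21*b^2*((a^2+b^2)*(1-a)^2 + ((1-a)^2+b^2)*a^2)*((a^2+b^2)*((1-a)^2+b^2)) + 14*b^4*((1-a)^2*(a^2+b^2)*(((1-a)^2+b^2)+2*(a^2+b^2)) + a^2*((1-a)^2+b^2)*((a^2+b^2)+2*((1-a)^2+b^2))))/(56*((a^2+b^2)*((1-a)^2+b^2))^3) from by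
    unfold d2Lb; field_simp; ring]
  rw [div_le_iff₀ (by positivity)]
  nlinarith [sq_nonneg (2*a-1), mul_nonneg (sq_nonneg (2*a-1)) (by positivity : (0:ℝ) ≤ b^6),
    mul_nonneg (sq_nonneg (a*(1-a))) (by positivity : (0:ℝ) ≤ b^2),
    sq_nonneg (a*(1-a)),
    mul_nonneg (mul_nonneg hPQ.le hPQ.le) (sq_nonneg (a*(1-a))),
    mul_nonneg (mul_nonneg (by positivity : (0:ℝ) ≤ b^2) hPQ.le) (sq_nonneg (a*(1-a))),
    sq_nonneg (7*b*((a^2+b^2)*((1-a)^2+b^2)) - 5*b^3*(a^2+b^2+(1-a)^2+b^2)),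
    mul_nonneg (mul_nonneg (by positivity : (0:ℝ) ≤ b^2) hPQ.le) (sq_nonneg (2*((a^2+b^2)*((1-a)^2+b^2)) - b^2*(a^2+b^2+(1-a)^2+b^2))),
    mul_pos hPQ hPQ, mul_pos (mul_pos hPQ hPQ) hPQ,
    mul_nonneg (mul_nonneg (by positivity : (0:ℝ) ≤ b^4) hPQ.le) (sq_nonneg (a^2-(1-a)^2)),
    mul_pos (pow_pos hb0 2) hPQ, mul_pos (pow_pos hb0 4) hPQ, mul_pos (pow_pos hb0 6) hPQ,
    mul_nonneg (by positivity : (0:ℝ) ≤ b^6) (sq_nonneg (a^2+b^2-((1-a)^2+b^2)))]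

theorem L1_deriv_bounds (a b a' b' : ℝ)
    (ha0 : 0 ≤ a) (ha : a ≤ 1/2) (hb0 : 0 < b) (hb : b ≤ 1)
    (ha'0 : 0 ≤ a') (ha' : a' ≤ 1/2) (ha'a : |a' - a| ≤ b/50)
    (hb'0 : 0 < b') (hb' : b' ≤ 1) (hb'b : |b' - b| ≤ b/50) :
    |deriv (fun x => L1 x b) a| < 2/b * L1 a b ∧
    deriv (deriv (fun x => L1 x b)) a' < 5/b^2 * L1 a b ∧
    |deriv (L1 a) b| < 2/b * L1 a b ∧
    deriv (deriv (L1 a)) b' < 4/b^2 * L1 a b := by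
  have hbne : b ≠ 0 := hb0.ne'
  have hQb : ((1-a)^2+b^2) ≠ 0 := by positivity
  refine ⟨?_, ?_, ?_, ?_⟩
  · rw [(hasDerivAt_L1_a b hbne a).deriv]
    calc |dLa a b| ≤ 11/100 := absdLa a b ha0 ha hb0 hb
      _ < 2/b * L1 a b := by
          rw [div_mul_eq_mul_div, lt_div_iff₀ hb0]
          exact lowA1 a b ha0 ha hb0 hb
  · have hd : deriv (fun x => L1 x b) = fun x => dLa x b :=
      funext fun x => (hasDerivAt_L1_a b hbne x).deriv
    rw [hd, (hasDerivAt_dLa b hbne a').deriv]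
    calc d2La a' b ≤ 7/25 := d2La_le a' b ha'0 ha' hb0 hb
      _ < 5/b^2 * L1 a b := by
          rw [div_mul_eq_mul_div, lt_div_iff₀ (by positivity)]
          exact lowA2 a b ha0 ha hb0 hb
  · rw [(hasDerivAt_L1_b a b hbne hQb).deriv]
    exact absdLb a b ha0 ha hb0 hb
  · have hev : deriv (L1 a) =ᶠ[nhds b'] fun y => dLb a y := by
      filter_upwards [eventually_ne_nhds hb'0.ne'] with y hy
      exact (hasDerivAt_L1_b a y hy (by positivity)).deriv
    rw [hev.deriv_eq, (hasDerivAt_dLb a b' hb'0.ne' (by positivity)).deriv]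
    calc d2Lb a b' ≤ 1/4 := d2Lb_le a b' ha0 ha hb'0 hb'
      _ < 4/b^2 * L1 a b := by
          rw [div_mul_eq_mul_div, lt_div_iff₀ (by positivity)]
          exact lowA3 a b ha0 ha hb0 hb
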